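/- Let s ≥ 1 and let μ be the probability measure placing mass 1/(8s) on each of the 4s shifts of (1^s 0^{3s})^* and each of the 4s shifts of (1^{3s} 0^s)^*. Then for every k ≤ s, μ([0^k]) = μ([1^k]) = 1/2 − (k−1)/(4s). -/

import Mathlib

/-!
A shift `T^j (1^t 0^{n-t})^*` with `j < n` starts with `1^k` exactly when `j + k ≤ t`, and with
`0^k` exactly when `t ≤ j` and `j + k ≤ n`. So for `k ≤ s` the cylinder `[1^k]` contains
`(s + 1 - k) + (3s + 1 - k)` of the atoms and `[0^k]` contains `(3s + 1 - k) + (s + 1 - k)` of them,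
in both cases `4s − 2(k − 1)` atoms of mass `1/(8s)`.
-/

open MeasureTheory Finset
open scoped ENNReal

/-- `blockShift n t j` is `T^j (1^t 0^{n-t})^*`. -/
def blockShift (n t j : ℕ) : ℕ → Bool := fun i => decide ((i + j) % n < t)

section BlockShift

variable {n t k j : ℕ}

theorem forall_lt_blockShift_eq_true_iff (hj : j < n) (hk : 1 ≤ k) (ht : t < n) :
    (∀ i < k, blockShift n t j i = true) ↔ j + k ≤ t := by
  simp only [blockShift, decide_eq_true_eq]
  refine ⟨fun h => ?_, fun h i hi => by rw [Nat.mod_eq_of_lt (by omega)]; omega⟩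
  by_contra! hc
  -- the last position of the window before it wraps around
  have h_last := h (min (k - 1) (n - 1 - j)) (by omega)
  rw [Nat.mod_eq_of_lt (by omega)] at h_last
  omega

theorem forall_lt_blockShift_eq_false_iff (hj : j < n) (hk : 1 ≤ k) (ht : 1 ≤ t) :
    (∀ i < k, blockShift n t j i = false) ↔ t ≤ j ∧ j + k ≤ n := by
  simp only [blockShift, decide_eq_false_iff_not, not_lt]
  refine ⟨fun h => ⟨?_, ?_⟩, fun h i hi => by rw [Nat.mod_eq_of_lt (by omega)]; omega⟩
  · simpa [Nat.mod_eq_of_lt hj] using h 0 hk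
  · by_contra! hc
    -- position `n - j` wraps around to the start of the block of ones
    have h_wrap := h (n - j) (by omega)
    rw [Nat.sub_add_cancel hj.le, Nat.mod_self] at h_wrap
    omega

theorem card_forall_lt_blockShift_eq_true (hk : 1 ≤ k) (ht : t < n) :
    #{j ∈ range n | ∀ i < k, blockShift n t j i = true} = t + 1 - k := by
  rw [filter_congr fun j hj => forall_lt_blockShift_eq_true_iff (mem_range.1 hj) hk ht,
    ← card_range (t + 1 - k)]
  congr 1
  ext j
  simp only [mem_filter, mem_range]
  omega

theorem card_forall_lt_blockShift_eq_false (hk : 1 ≤ k) (ht : 1 ≤ t) :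
    #{j ∈ range n | ∀ i < k, blockShift n t j i = false} = n + 1 - k - t := by
  rw [filter_congr fun j hj => forall_lt_blockShift_eq_false_iff (mem_range.1 hj) hk ht,
    ← Nat.card_Ico t (n + 1 - k)]
  congr 1
  ext j
  simp only [mem_filter, mem_range, mem_Ico]
  omega

end BlockShift

theorem MeasureTheory.Measure.finsetSum_dirac_apply {α ι : Type*} [MeasurableSpace α]
    (t : Finset ι) (f : ι → α) {A : Set α} [DecidablePred (· ∈ A)] (hA : MeasurableSet A) :
    (∑ j ∈ t, Measure.dirac (f j)) A = #{j ∈ t | f j ∈ A} := by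
  simp [Measure.finsetSum_apply, Measure.dirac_apply' _ hA, Set.indicator_apply]

theorem inv_eight_mul_mul_natCast_sub {s : ℕ} (hs : s ≠ 0) (m : ℕ) :
    (8 * (s : ℝ≥0∞))⁻¹ * ((4 * s - 2 * m : ℕ) : ℝ≥0∞) = 1 / 2 - m / (4 * s) := by
  have h8 : 8 * (s : ℝ≥0∞) = 2 * (4 * s) := by ring
  have half : 4 * (s : ℝ≥0∞) / (2 * (4 * s)) = 1 / 2 := by
    simpa using ENNReal.mul_div_mul_right 1 2 (by simpa using hs) (by simp [ENNReal.mul_eq_top])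
  rw [mul_comm, ENNReal.natCast_sub, ENNReal.sub_mul fun _ _ => by simp [hs], ← div_eq_mul_inv,
    ← div_eq_mul_inv, h8]
  push_cast
  rw [half, ENNReal.mul_div_mul_left _ _ (by simp) (by simp)]

/-- For `s ≥ 1`, the uniform measure on the `8s` points given by the `4s` shifts of
`(1^s0^{3s})^*` together with the `4s` shifts of `(1^{3s}0^s)^*` gives the cylinders
`[0^k]` and `[1^k]` (for `1 ≤ k ≤ s`) mass `1/2 − (k−1)/(4s)`. -/
theorem stmt7 (s : ℕ) (hs : 1 ≤ s) (μ : Measure (ℕ → Bool))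
    (hμ : μ = (8 * (s : ℝ≥0∞))⁻¹ •
      ∑ j ∈ Finset.range (4 * s),
        (Measure.dirac (fun i : ℕ => decide ((i + j) % (4 * s) < s)) +
         Measure.dirac (fun i : ℕ => decide ((i + j) % (4 * s) < 3 * s)))) :
    ∀ k : ℕ, 1 ≤ k → k ≤ s →
      μ {ω | ∀ i < k, ω i = false} = 1 / 2 - (k - 1 : ℕ) / (4 * s) ∧
      μ {ω | ∀ i < k, ω i = true} = 1 / 2 - (k - 1 : ℕ) / (4 * s) := by
  intro k hk hks
  replace hμ : μ = (8 * (s : ℝ≥0∞))⁻¹ • ∑ j ∈ range (4 * s),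
      (Measure.dirac (blockShift (4 * s) s j) + Measure.dirac (blockShift (4 * s) (3 * s) j)) := hμ
  have hμ_cyl (b : Bool) : μ {ω | ∀ i < k, ω i = b} = (8 * (s : ℝ≥0∞))⁻¹ *
      (#{j ∈ range (4 * s) | ∀ i < k, blockShift (4 * s) s j i = b} +
        #{j ∈ range (4 * s) | ∀ i < k, blockShift (4 * s) (3 * s) j i = b} : ℕ) := by
    rw [hμ, Measure.smul_apply, sum_add_distrib, Measure.add_apply,
      Measure.finsetSum_dirac_apply _ _ (by measurability),
      Measure.finsetSum_dirac_apply _ _ (by measurability)]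
    simp only [Set.mem_ofPred_eq, smul_eq_mul, Nat.cast_add]
  rw [hμ_cyl, hμ_cyl, card_forall_lt_blockShift_eq_false hk hs,
    card_forall_lt_blockShift_eq_false hk (by omega),
    card_forall_lt_blockShift_eq_true hk (by omega),
    card_forall_lt_blockShift_eq_true hk (by omega),
    show 4 * s + 1 - k - s + (4 * s + 1 - k - 3 * s) = 4 * s - 2 * (k - 1) by omega,
    show s + 1 - k + (3 * s + 1 - k) = 4 * s - 2 * (k - 1) by omega,
    inv_eight_mul_mul_natCast_sub (by omega)]
  exact ⟨rfl, rfl⟩
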